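/- The function y ↦ N(y; μ, σ₊²) · Ψ(g(y)) / Ψ((f* − μ)/σx), with g(y) = (σ₊² f* − σn² μ − σx² y)/(σx σn σ₊) and σ₊² = σx² + σn² (σx, σn > 0), is a probability density: it is nonnegative and integrates to 1 over ℝ. -/

import Mathlib

open MeasureTheory ProbabilityTheory Real

/-- Gaussian density N(z; m, s²). -/
noncomputable def gauss (m s2 z : ℝ) : ℝ :=
  (Real.sqrt (2 * Real.pi * s2))⁻¹ * Real.exp (-(z - m) ^ 2 / (2 * s2))

/-- Standard Gaussian density ψ. -/
noncomputable def stdPdf (t : ℝ) : ℝ := gauss 0 1 t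

/-- Standard Gaussian CDF Ψ. -/
noncomputable def stdCdf (t : ℝ) : ℝ := ∫ u in Set.Iic t, stdPdf u

/-!
Write the argument of Ψ as `α - β y`. For independent `Y ~ N(μ, σ₊²)` and `Z ~ N(0, 1)` the
integral `∫ N(y; μ, σ₊²) Ψ(α - β y) dy` is `P(βY + Z ≤ α)`, and `βY + Z ~ N(βμ, β²σ₊² + 1)`
(convolution of Gaussians), so it equals `Ψ((α - βμ) / √(β²σ₊² + 1))`. For the given `α, β`
this is exactly the normalising constant `Ψ((f* - μ) / σx)`.
-/

open Set NNReal

lemma gauss_nonneg (m s2 z : ℝ) : 0 ≤ gauss m s2 z := by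
  unfold gauss; positivity

lemma gauss_eq_gaussianPDFReal (m : ℝ) {v : ℝ} (hv : 0 ≤ v) :
    gauss m v = gaussianPDFReal m v.toNNReal := by
  funext z
  simp [gauss, gaussianPDFReal, Real.coe_toNNReal _ hv]

lemma stdCdf_eq_measureReal (t : ℝ) : stdCdf t = (gaussianReal 0 1).real (Iic t) := by
  rw [measureReal_def, gaussianReal_apply_eq_integral _ one_ne_zero, ENNReal.toReal_ofReal
    (setIntegral_nonneg measurableSet_Iic fun _ _ ↦ gaussianPDFReal_nonneg _ _ _)]
  simp [stdCdf, stdPdf, gauss_eq_gaussianPDFReal 0 zero_le_one]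

lemma stdCdf_pos (t : ℝ) : 0 < stdCdf t := by
  rw [stdCdf_eq_measureReal]
  refine ENNReal.toReal_pos (fun h ↦ ?_) (measure_ne_top _ _)
  simpa using gaussianReal_absolutelyContinuous' 0 one_ne_zero h

lemma MeasureTheory.measureReal_conv_Iic (μ ν : Measure ℝ) [IsFiniteMeasure ν] (c : ℝ) :
    (μ ∗ ν).real (Iic c) = ∫ x, ν.real (Iic (c - x)) ∂μ := by
  have hs : MeasurableSet ((fun p : ℝ × ℝ ↦ p.1 + p.2) ⁻¹' Iic c) :=
    measurable_add measurableSet_Iic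
  have hslice (x : ℝ) : Prod.mk x ⁻¹' ((fun p : ℝ × ℝ ↦ p.1 + p.2) ⁻¹' Iic c) = Iic (c - x) := by
    ext y; simp [le_sub_iff_add_le']
  rw [measureReal_def, Measure.conv, Measure.map_apply measurable_add measurableSet_Iic,
    Measure.prod_apply hs]
  simp_rw [hslice, measureReal_def]
  rw [integral_toReal]
  · exact (Antitone.measurable fun a b hab ↦
      measure_mono (Iic_subset_Iic.2 (by linarith))).aemeasurable
  · exact Filter.Eventually.of_forall fun _ ↦ measure_lt_top _ _

lemma gaussianReal_real_Iic (m : ℝ) {v : ℝ≥0} (hv : v ≠ 0) (c : ℝ) :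
    (gaussianReal m v).real (Iic c) = stdCdf ((c - m) / √v) := by
  have hs : 0 < √(v : ℝ) := Real.sqrt_pos.2 (by positivity)
  have hmap : (gaussianReal 0 1).map (fun z ↦ √v * z + m) = gaussianReal m v := by
    change Measure.map ((· + m) ∘ (√v * ·)) _ = _
    rw [← Measure.map_map (measurable_add_const m) (measurable_const_mul _),
      gaussianReal_map_const_mul, gaussianReal_map_add_const]
    congr 1
    · simp
    · ext; simp
  have hpre : (fun z ↦ √v * z + m) ⁻¹' Iic c = Iic ((c - m) / √v) := by
    ext z
    simp only [mem_preimage, mem_Iic, le_div_iff₀ hs]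
    constructor <;> intro h <;> linarith
  rw [← hmap, map_measureReal_apply (by fun_prop) measurableSet_Iic, hpre, stdCdf_eq_measureReal]

lemma integral_stdCdf_sub_mul_gaussianReal (m α β : ℝ) (v : ℝ≥0) :
    ∫ y, stdCdf (α - β * y) ∂gaussianReal m v
      = (gaussianReal (β * m) ((β ^ 2).toNNReal * v + 1)).real (Iic α) := by
  have hsum : (gaussianReal m v).map (β * ·) ∗ gaussianReal 0 1
      = gaussianReal (β * m) ((β ^ 2).toNNReal * v + 1) := by
    rw [gaussianReal_map_const_mul, gaussianReal_conv_gaussianReal, add_zero,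
      Real.toNNReal_of_nonneg (sq_nonneg β)]
  have hmeas : Measurable fun x ↦ (gaussianReal 0 1).real (Iic (α - x)) :=
    Antitone.measurable fun a b hab ↦ measureReal_mono (Iic_subset_Iic.2 (by linarith))
  rw [← hsum, measureReal_conv_Iic, integral_map (by fun_prop) hmeas.aestronglyMeasurable]
  simp_rw [stdCdf_eq_measureReal]

lemma integral_gauss_mul_stdCdf (m α β : ℝ) {S : ℝ} (hS : 0 < S) :
    ∫ y, gauss m S y * stdCdf (α - β * y) = stdCdf ((α - β * m) / √(β ^ 2 * S + 1)) := by
  have hdens : ∫ y, stdCdf (α - β * y) ∂gaussianReal m S.toNNReal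
      = ∫ y, gauss m S y * stdCdf (α - β * y) := by
    rw [integral_gaussianReal_eq_integral_smul (by simpa using hS),
      gauss_eq_gaussianPDFReal m hS.le]
    rfl
  rw [← hdens, integral_stdCdf_sub_mul_gaussianReal, gaussianReal_real_Iic _ (by positivity)]
  simp [hS.le, sq_nonneg]

theorem stmt_3 (μ fstar σx σn : ℝ) (hσx : 0 < σx) (hσn : 0 < σn) :
    (∀ y : ℝ, 0 ≤ gauss μ (σx ^ 2 + σn ^ 2) y *
        stdCdf (((σx ^ 2 + σn ^ 2) * fstar - σn ^ 2 * μ - σx ^ 2 * y) /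
          (σx * σn * Real.sqrt (σx ^ 2 + σn ^ 2))) /
        stdCdf ((fstar - μ) / σx)) ∧
    (∫ y : ℝ, gauss μ (σx ^ 2 + σn ^ 2) y *
        stdCdf (((σx ^ 2 + σn ^ 2) * fstar - σn ^ 2 * μ - σx ^ 2 * y) /
          (σx * σn * Real.sqrt (σx ^ 2 + σn ^ 2))) /
        stdCdf ((fstar - μ) / σx)) = 1 := by
  refine ⟨fun y ↦ div_nonneg (mul_nonneg (gauss_nonneg _ _ _) (stdCdf_pos _).le)
    (stdCdf_pos _).le, ?_⟩
  set σ := √(σx ^ 2 + σn ^ 2)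
  have hσ : 0 < σ := Real.sqrt_pos.2 (by positivity)
  have hσ2 : σ ^ 2 = σx ^ 2 + σn ^ 2 := Real.sq_sqrt (by positivity)
  have harg (y : ℝ) : ((σx ^ 2 + σn ^ 2) * fstar - σn ^ 2 * μ - σx ^ 2 * y) / (σx * σn * σ)
      = ((σx ^ 2 + σn ^ 2) * fstar - σn ^ 2 * μ) / (σx * σn * σ) - σx / (σn * σ) * y := by
    field_simp
  have hvar : √((σx / (σn * σ)) ^ 2 * (σx ^ 2 + σn ^ 2) + 1) = σ / σn := by
    rw [← Real.sqrt_sq (div_pos hσ hσn).le]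
    congr 1
    rw [← hσ2]
    field_simp
    linarith
  have hmean : (((σx ^ 2 + σn ^ 2) * fstar - σn ^ 2 * μ) / (σx * σn * σ) - σx / (σn * σ) * μ)
      / (σ / σn) = (fstar - μ) / σx := by
    rw [← hσ2]
    field_simp
    linear_combination μ * hσ2
  simp_rw [harg]
  rw [integral_div, integral_gauss_mul_stdCdf _ _ _ (by positivity), hvar, hmean,
    div_self (stdCdf_pos _).ne']
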